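/- Let B_J ≥ O entrywise and (B₁,...,B_d) a splitting of B_J, with iteration matrix 𝓑_{(d)} having leading eigenvalue λ = ρ(𝓑_{(d)}) > 0 and nonnegative eigenvector [α₁;...;α_d]. If λ ≤ 1 then 0 ≤ λα₁ ≤ α_d ≤ α_{d-1} ≤ ... ≤ α₂ ≤ α₁ entrywise, and if λ ≥ 1 then 0 ≤ α₁ ≤ α₂ ≤ ... ≤ α_d ≤ λα₁ entrywise. -/

import Mathlib

open Matrix

/-- A splitting of `B`: nonzero parts summing to `B` with pairwise vanishing
Hadamard products. -/
def IsSplitting {n d : ℕ} (B : Matrix (Fin n) (Fin n) ℝ)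
    (Bs : Fin d → Matrix (Fin n) (Fin n) ℝ) : Prop :=
  (∀ p, Bs p ≠ 0) ∧ (∑ p, Bs p = B) ∧
    ∀ p q, p ≠ q → Matrix.hadamard (Bs p) (Bs q) = 0

/-- Strictly block-lower-triangular part `𝓛` of the splitting scheme. -/
def blockL {n d : ℕ} (Bs : Fin d → Matrix (Fin n) (Fin n) ℝ) :
    Matrix (Fin d × Fin n) (Fin d × Fin n) ℝ :=
  Matrix.of fun pi qj => if qj.1 < pi.1 then Bs qj.1 pi.2 qj.2 else 0

/-- Block-upper-triangular part `𝓤` of the splitting scheme. -/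
def blockU {n d : ℕ} (Bs : Fin d → Matrix (Fin n) (Fin n) ℝ) :
    Matrix (Fin d × Fin n) (Fin d × Fin n) ℝ :=
  Matrix.of fun pi qj => if pi.1 ≤ qj.1 then Bs qj.1 pi.2 qj.2 else 0

/-- The iteration matrix `𝓑 = (𝓘 - 𝓛)⁻¹ 𝓤` of a splitting. -/
noncomputable def iterMat {n d : ℕ} (Bs : Fin d → Matrix (Fin n) (Fin n) ℝ) :
    Matrix (Fin d × Fin n) (Fin d × Fin n) ℝ :=
  (1 - blockL Bs)⁻¹ * blockU Bs

/-- Complexification of the iteration matrix. -/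
noncomputable def iterMatC {n d : ℕ} (Bs : Fin d → Matrix (Fin n) (Fin n) ℝ) :
    Matrix (Fin d × Fin n) (Fin d × Fin n) ℂ :=
  (iterMat Bs).map Complex.ofReal

/-- Spectral radius of a real matrix, via its complexification. -/
noncomputable def specRad {m : Type*} [Fintype m] [DecidableEq m]
    (M : Matrix m m ℝ) : ENNReal :=
  spectralRadius ℂ (M.map Complex.ofReal)

lemma blockL_blockTriangular {n d : ℕ} (Bs : Fin d → Matrix (Fin n) (Fin n) ℝ) :
    Matrix.BlockTriangular (1 - blockL Bs)
      (fun pi : Fin d × Fin n => OrderDual.toDual pi.1) := by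
  intro x y h
  have h' : x.1 < y.1 := h
  have hxy : x ≠ y := fun e => absurd (e ▸ h') (lt_irrefl _)
  simp [Matrix.sub_apply, Matrix.one_apply_ne hxy, blockL, not_lt.mpr h'.le]

lemma det_one_sub_blockL {n d : ℕ} (Bs : Fin d → Matrix (Fin n) (Fin n) ℝ) :
    (1 - blockL Bs).det = 1 := by
  rw [(blockL_blockTriangular Bs).det]
  apply Finset.prod_eq_one
  intro a _
  have hblk : (1 - blockL Bs).toSquareBlock
      (fun pi : Fin d × Fin n => OrderDual.toDual pi.1) a = 1 := by
    ext x y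
    have hfst : x.1.1 = y.1.1 := by
      have := x.2.trans y.2.symm
      exact congrArg OrderDual.ofDual this
    simp only [Matrix.toSquareBlock, Matrix.toSquareBlockProp, Matrix.toBlock_apply,
      Matrix.sub_apply, blockL, Matrix.of_apply, hfst, lt_irrefl, if_neg (lt_irrefl _)]
    rw [if_false, sub_zero]
    by_cases hxy : x = y
    · rw [hxy, Matrix.one_apply_eq, Matrix.one_apply_eq]
    · rw [Matrix.one_apply_ne hxy, Matrix.one_apply_ne (fun e => hxy (Subtype.ext e))]
  rw [hblk, Matrix.det_one]

lemma splitting_nonneg {n d : ℕ} {B : Matrix (Fin n) (Fin n) ℝ}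
    {Bs : Fin d → Matrix (Fin n) (Fin n) ℝ}
    (hpos : ∀ i j, 0 ≤ B i j) (hsplit : IsSplitting B Bs) :
    ∀ p i j, 0 ≤ Bs p i j := by
  intro p i j
  by_contra hneg
  push_neg at hneg
  have hz : ∀ q, q ≠ p → Bs q i j = 0 := by
    intro q hq
    have h0 := hsplit.2.2 p q (Ne.symm hq)
    have h1 : Bs p i j * Bs q i j = 0 := by
      have := congrFun (congrFun h0 i) j
      simpa [Matrix.hadamard] using this
    rcases mul_eq_zero.mp h1 with h | h
    · exact absurd h (ne_of_lt hneg)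
    · exact h
  have hsum : ∑ q, Bs q i j = Bs p i j :=
    Finset.sum_eq_single p (fun q _ hq => hz q hq) (by simp)
  have hBJ : B i j = Bs p i j := by
    rw [← hsplit.2.1]
    simp only [Matrix.sum_apply]
    exact hsum
  have := hpos i j
  rw [hBJ] at this
  linarith

/-- Chain inequalities for the blocks of a nonnegative leading eigenvector of
the iteration matrix of a splitting of a nonnegative Jacobi matrix. -/
theorem leading_eigenvector_chain (n d : ℕ) (BJ : Matrix (Fin n) (Fin n) ℝ)
    (hpos : ∀ i j, 0 ≤ BJ i j)
    (Bs : Fin (d + 1) → Matrix (Fin n) (Fin n) ℝ)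
    (hsplit : IsSplitting BJ Bs)
    (lam : ℝ) (hlam : 0 < lam)
    (hsr : ENNReal.ofReal lam = specRad (iterMat Bs))
    (v : Fin (d + 1) × Fin n → ℝ) (hv : v ≠ 0)
    (hvnonneg : ∀ x, 0 ≤ v x)
    (heig : (iterMat Bs).mulVec v = lam • v) :
    (lam ≤ 1 →
      (∀ i, 0 ≤ lam * v (0, i)) ∧
      (∀ i, lam * v (0, i) ≤ v (Fin.last d, i)) ∧
      (∀ p q : Fin (d + 1), p ≤ q → ∀ i, v (q, i) ≤ v (p, i))) ∧
    (1 ≤ lam →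
      (∀ i, 0 ≤ v (0, i)) ∧
      (∀ p q : Fin (d + 1), p ≤ q → ∀ i, v (p, i) ≤ v (q, i)) ∧
      (∀ i, v (Fin.last d, i) ≤ lam * v (0, i))) := by
  have hBnn : ∀ p i j, 0 ≤ Bs p i j := splitting_nonneg hpos hsplit
  set M : Matrix (Fin (d + 1) × Fin n) (Fin (d + 1) × Fin n) ℝ := 1 - blockL Bs with hMdef
  have hdet : IsUnit M.det := by rw [hMdef, det_one_sub_blockL]; exact isUnit_one
  -- the un-inverted eigenvalue equation
  have hU : (blockU Bs).mulVec v = fun x => lam * v x - lam * ((blockL Bs).mulVec v) x := by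
    have h1 : M * (M⁻¹ * blockU Bs) = blockU Bs := by
      rw [← Matrix.mul_assoc, Matrix.mul_nonsing_inv _ hdet, Matrix.one_mul]
    have heq : (M⁻¹ * blockU Bs) *ᵥ v = lam • v := heig
    have h2 : (blockU Bs).mulVec v = M.mulVec (lam • v) := by
      rw [← h1, ← Matrix.mulVec_mulVec, heq]
    funext x
    rw [h2]
    have h3 : M.mulVec (lam • v) = lam • M.mulVec v := by
      rw [Matrix.mulVec_smul]
    rw [h3, hMdef, Matrix.sub_mulVec, Matrix.one_mulVec]
    simp [mul_sub]
  -- scalar block form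
  set S : Fin (d + 1) → Fin n → ℝ := fun q i => ∑ j, Bs q i j * v (q, j) with hSdef
  have Snn : ∀ q i, 0 ≤ S q i := fun q i =>
    Finset.sum_nonneg fun j _ => mul_nonneg (hBnn q i j) (hvnonneg _)
  have key : ∀ p i, (∑ q, if p ≤ q then S q i else 0) +
      lam * (∑ q, if q < p then S q i else 0) = lam * v (p, i) := by
    intro p i
    have h := congrFun hU (p, i)
    simp only [Matrix.mulVec, dotProduct, blockU, blockL, Matrix.of_apply,
      Fintype.sum_prod_type] at h
    have e1 : ∀ q : Fin (d + 1),
        (∑ j, (if p ≤ q then Bs q i j else 0) * v (q, j)) = if p ≤ q then S q i else 0 := by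
      intro q; split_ifs with hc <;> simp [hSdef]
    have e2 : ∀ q : Fin (d + 1),
        (∑ j, (if q < p then Bs q i j else 0) * v (q, j)) = if q < p then S q i else 0 := by
      intro q; split_ifs with hc <;> simp [hSdef]
    simp only [e1, e2] at h
    linarith
  -- consecutive step relation
  have step : ∀ (p : Fin d) (i : Fin n),
      lam * v (p.succ, i) - lam * v (p.castSucc, i) = (lam - 1) * S p.castSucc i := by
    intro p i
    have k1 := key p.castSucc i
    have k2 := key p.succ i
    have hd1 : (∑ q, if p.castSucc ≤ q then S q i else 0) -
        (∑ q, if p.succ ≤ q then S q i else 0) = S p.castSucc i := by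
      rw [← Finset.sum_sub_distrib]
      have e : ∀ q ∈ Finset.univ, ((if p.castSucc ≤ q then S q i else 0) -
          (if p.succ ≤ q then S q i else 0)) = if q = p.castSucc then S q i else 0 := by
        intro q _
        rcases lt_trichotomy q p.castSucc with h | h | h
        · rw [if_neg (not_le.mpr h), if_neg (not_le.mpr (h.trans (Fin.castSucc_lt_succ : p.castSucc < p.succ))),
            if_neg (ne_of_lt h), sub_zero]
        · subst h
          rw [if_pos le_rfl, if_neg (not_le.mpr (Fin.castSucc_lt_succ : p.castSucc < p.succ)), if_pos rfl, sub_zero]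
        · rw [if_pos h.le, if_pos (Fin.castSucc_lt_iff_succ_le.mp h),
            if_neg (ne_of_gt h), sub_self]
      rw [Finset.sum_congr rfl e, Finset.sum_ite_eq' Finset.univ p.castSucc (fun q => S q i)]
      simp
    have hd2 : (∑ q, if q < p.succ then S q i else 0) -
        (∑ q, if q < p.castSucc then S q i else 0) = S p.castSucc i := by
      rw [← Finset.sum_sub_distrib]
      have e : ∀ q ∈ Finset.univ, ((if q < p.succ then S q i else 0) -
          (if q < p.castSucc then S q i else 0)) = if q = p.castSucc then S q i else 0 := by
        intro q _
        rcases lt_trichotomy q p.castSucc with h | h | h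
        · rw [if_pos (h.trans (Fin.castSucc_lt_succ : p.castSucc < p.succ)), if_pos h, if_neg (ne_of_lt h), sub_self]
        · subst h
          rw [if_pos (Fin.castSucc_lt_succ : p.castSucc < p.succ), if_neg (lt_irrefl _), if_pos rfl, sub_zero]
        · rw [if_neg (not_lt.mpr (Fin.castSucc_lt_iff_succ_le.mp h)),
            if_neg (not_lt.mpr h.le), if_neg (ne_of_gt h), sub_zero]
      rw [Finset.sum_congr rfl e, Finset.sum_ite_eq' Finset.univ p.castSucc (fun q => S q i)]
      simp
    nlinarith [k1, k2, hd1, hd2]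
  -- endpoint relation
  have endpt : ∀ i : Fin n,
      lam * (lam * v (0, i)) - lam * v (Fin.last d, i) = (lam - 1) * S (Fin.last d) i := by
    intro i
    have k0 := key 0 i
    have kl := key (Fin.last d) i
    have h00 : (∑ q, if (0 : Fin (d + 1)) ≤ q then S q i else 0) = ∑ q, S q i := by
      apply Finset.sum_congr rfl
      intro q _
      rw [if_pos (Fin.zero_le q)]
    have h01 : (∑ q : Fin (d + 1), if q < (0 : Fin (d + 1)) then S q i else 0) = 0 := by
      apply Finset.sum_eq_zero
      intro q _
      rw [if_neg (Fin.not_lt_zero q)]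
    have hl0 : (∑ q, if Fin.last d ≤ q then S q i else 0) = S (Fin.last d) i := by
      have e : ∀ q ∈ Finset.univ, (if Fin.last d ≤ q then S q i else 0) =
          if q = Fin.last d then S q i else 0 := by
        intro q _
        by_cases h : q = Fin.last d
        · subst h; rw [if_pos le_rfl, if_pos rfl]
        · rw [if_neg (fun hle => h (le_antisymm (Fin.le_last q) hle)), if_neg h]
      rw [Finset.sum_congr rfl e, Finset.sum_ite_eq' Finset.univ (Fin.last d) (fun q => S q i)]
      simp
    have hl1 : (∑ q, if q < Fin.last d then S q i else 0) =
        (∑ q, S q i) - S (Fin.last d) i := by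
      have e : ∀ q ∈ Finset.univ, (if q < Fin.last d then S q i else 0) =
          S q i - (if q = Fin.last d then S q i else 0) := by
        intro q _
        by_cases h : q = Fin.last d
        · subst h; rw [if_neg (lt_irrefl _), if_pos rfl, sub_self]
        · rw [if_pos (Fin.lt_last_iff_ne_last.mpr h), if_neg h, sub_zero]
      rw [Finset.sum_congr rfl e, Finset.sum_sub_distrib,
        Finset.sum_ite_eq' Finset.univ (Fin.last d) (fun q => S q i)]
      simp
    rw [h00, h01] at k0
    rw [hl0, hl1] at kl
    nlinarith [k0, kl]
  constructor
  · intro hle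
    refine ⟨fun i => mul_nonneg hlam.le (hvnonneg _), fun i => ?_, fun p q hpq i => ?_⟩
    · have h := endpt i
      have hS := Snn (Fin.last d) i
      nlinarith
    · have hmono : Monotone (fun p : Fin (d + 1) => -v (p, i)) := by
        apply Fin.monotone_iff_le_succ.mpr
        intro p
        have h := step p i
        have hS := Snn p.castSucc i
        have : lam * v (p.succ, i) ≤ lam * v (p.castSucc, i) := by nlinarith
        have := le_of_mul_le_mul_left (by linarith : lam * v (p.succ, i) ≤ lam * v (p.castSucc, i)) hlam
        simp only [neg_le_neg_iff]
        linarith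
      have := hmono hpq
      simpa using this
  · intro hge
    refine ⟨fun i => hvnonneg _, fun p q hpq i => ?_, fun i => ?_⟩
    · have hmono : Monotone (fun p : Fin (d + 1) => v (p, i)) := by
        apply Fin.monotone_iff_le_succ.mpr
        intro p
        have h := step p i
        have hS := Snn p.castSucc i
        have : lam * v (p.castSucc, i) ≤ lam * v (p.succ, i) := by nlinarith
        exact le_of_mul_le_mul_left this hlam
      exact hmono hpq
    · have h := endpt i
      have hS := Snn (Fin.last d) i
      have : lam * v (Fin.last d, i) ≤ lam * (lam * v (0, i)) := by nlinarith
      exact le_of_mul_le_mul_left this hlam
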